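/- arXiv:2102.07722 — 2 statements merged into one kernel-verified Lean document; each statement's English description precedes it below -/
import Mathlib

section
/- Let β = (β_n) be a Cantor real base, x ∈ [0,1], and a = (a_n) a sequence of natural numbers. Then a equals the greedy β-expansion of x if and only if val_β(a) = x and for every ℓ ∈ ℕ, ∑_{n=ℓ+1}^∞ a_n / ∏_{i=0}^n β_i < 1 / ∏_{i=0}^ℓ β_i. -/
open Filter

/-- Product of the first `n+1` terms of the base sequence. -/
noncomputable def cprod (β : ℕ → ℝ) (n : ℕ) : ℝ := ∏ i ∈ Finset.range (n+1), β i

/-- A Cantor real base: all terms exceed 1 and the partial products tend to infinity. -/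
def IsCantorBase (β : ℕ → ℝ) : Prop :=
  (∀ n, 1 < β n) ∧ Tendsto (cprod β) atTop atTop

/-- Value of a real-digit sequence in a Cantor base. -/
noncomputable def valB (β : ℕ → ℝ) (a : ℕ → ℝ) : ℝ := ∑' n, a n / cprod β n

/-- Value of a natural-digit sequence in a Cantor base. -/
noncomputable def valN (β : ℕ → ℝ) (a : ℕ → ℕ) : ℝ := valB β (fun n => (a n : ℝ))

/-- Remainders of the greedy algorithm. -/
noncomputable def greedyRem (β : ℕ → ℝ) (x : ℝ) : ℕ → ℝ
  | 0 => β 0 * x - ⌊β 0 * x⌋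
  | n+1 => β (n+1) * greedyRem β x n - ⌊β (n+1) * greedyRem β x n⌋

/-- Digits of the greedy expansion. -/
noncomputable def greedy (β : ℕ → ℝ) (x : ℝ) : ℕ → ℕ
  | 0 => (⌊β 0 * x⌋).toNat
  | n+1 => (⌊β (n+1) * greedyRem β x n⌋).toNat

/-- Remainders of the quasi-greedy algorithm started at `1`:
at each step the largest digit keeping the remainder strictly positive is chosen. -/
noncomputable def qRem (β : ℕ → ℝ) : ℕ → ℝ
  | 0 => β 0 - (⌈β 0⌉ - 1)
  | n+1 => β (n+1) * qRem β n - (⌈β (n+1) * qRem β n⌉ - 1)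

/-- Digits of the quasi-greedy expansion of `1`. -/
noncomputable def quasiGreedy (β : ℕ → ℝ) : ℕ → ℕ
  | 0 => (⌈β 0⌉ - 1).toNat
  | n+1 => (⌈β (n+1) * qRem β n⌉ - 1).toNat

/-- The `n`-shifted base `β^{(n)}`. -/
def shiftBase (β : ℕ → ℝ) (n : ℕ) : ℕ → ℝ := fun k => β (n + k)

/-- The `n`-fold shift `σ^n` of a digit sequence. -/
def shiftSeq (a : ℕ → ℕ) (n : ℕ) : ℕ → ℕ := fun k => a (n + k)

/-- Strict lexicographic order on digit sequences. -/
def LexLt (a b : ℕ → ℕ) : Prop := ∃ ℓ, (∀ k, k < ℓ → a k = b k) ∧ a ℓ < b ℓ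

/-- Lexicographic order on digit sequences. -/
def LexLe (a b : ℕ → ℕ) : Prop := LexLt a b ∨ a = b

/-- The set of greedy expansions of points of `[0,1)`. -/
def Dset (β : ℕ → ℝ) : Set (ℕ → ℕ) := {a | ∃ x ∈ Set.Ico (0:ℝ) 1, a = greedy β x}

/-!
Write `r₋₁ = x` and `Pₙ = β₀ ⋯ βₙ₋₁`. One greedy step reads `βₙ rₙ₋₁ = εₙ + rₙ` with `rₙ ∈ [0, 1)`,
so `εₙ / Pₙ₊₁ = rₙ₋₁ / Pₙ - rₙ / Pₙ₊₁` and the digit series telescopes: its tail from `n` is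
`rₙ₋₁ / Pₙ`, which tends to `0` because `Pₙ → ∞`. The tail condition `∑_{n>ℓ} aₙ / Pₙ₊₁ < 1 / P_{ℓ+1}`
says exactly that the scaled tails `P_{ℓ+1} ∑_{n>ℓ} aₙ / Pₙ₊₁` lie in `[0, 1)`; by induction they
are then the greedy remainders, and the digits `aₙ` are the greedy digits.
-/

open Topology Finset

variable {β : ℕ → ℝ} {x : ℝ}

lemma prod_range_pos (hβ : ∀ n, 0 < β n) (n : ℕ) : 0 < ∏ i ∈ range n, β i :=
  prod_pos fun i _ => hβ i

lemma cprod_pos (hβ : ∀ n, 0 < β n) (n : ℕ) : 0 < cprod β n :=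
  prod_range_pos hβ (n + 1)

lemma cprod_eq_prod_range_mul (β : ℕ → ℝ) (n : ℕ) :
    cprod β n = (∏ i ∈ range n, β i) * β n :=
  prod_range_succ β n

/-- `prevRem β x n = rₙ₋₁`, with `r₋₁ = x`. -/
noncomputable def prevRem (β : ℕ → ℝ) (x : ℝ) : ℕ → ℝ
  | 0 => x
  | n + 1 => greedyRem β x n

lemma greedyRem_eq_fract (β : ℕ → ℝ) (x : ℝ) (n : ℕ) :
    greedyRem β x n = Int.fract (β n * prevRem β x n) := by
  cases n <;> rfl

lemma greedy_eq_floor (β : ℕ → ℝ) (x : ℝ) (n : ℕ) :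
    greedy β x n = ⌊β n * prevRem β x n⌋.toNat := by
  cases n <;> rfl

lemma greedyRem_nonneg (n : ℕ) : 0 ≤ greedyRem β x n := by
  rw [greedyRem_eq_fract]
  exact Int.fract_nonneg _

lemma greedyRem_lt_one (n : ℕ) : greedyRem β x n < 1 := by
  rw [greedyRem_eq_fract]
  exact Int.fract_lt_one _

lemma prevRem_nonneg (hx : 0 ≤ x) : ∀ n, 0 ≤ prevRem β x n
  | 0 => hx
  | _ + 1 => greedyRem_nonneg _

lemma greedy_step {n m : ℕ} {c : ℝ} (h : β n * prevRem β x n = m + c) (hc : c ∈ Set.Ico 0 1) :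
    greedy β x n = m ∧ greedyRem β x n = c := by
  rw [greedy_eq_floor, greedyRem_eq_fract, h, Int.floor_natCast_add, Int.floor_eq_zero_iff.mpr hc,
    Int.fract_natCast_add, Int.fract_eq_self.mpr hc]
  simp

lemma greedy_cast (hβ : ∀ n, 0 < β n) (hx : 0 ≤ x) (n : ℕ) :
    (greedy β x n : ℝ) = β n * prevRem β x n - greedyRem β x n := by
  have hfloor : 0 ≤ ⌊β n * prevRem β x n⌋ :=
    Int.floor_nonneg.mpr (mul_nonneg (hβ n).le (prevRem_nonneg hx n))
  rw [greedy_eq_floor, greedyRem_eq_fract, ← Int.self_sub_floor, sub_sub_cancel,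
    ← Int.toNat_of_nonneg hfloor]
  rfl

noncomputable def scaledRem (β : ℕ → ℝ) (x : ℝ) (n : ℕ) : ℝ :=
  prevRem β x n / ∏ i ∈ range n, β i

lemma scaledRem_zero (β : ℕ → ℝ) (x : ℝ) : scaledRem β x 0 = x := by
  simp [scaledRem, prevRem]

lemma scaledRem_succ (β : ℕ → ℝ) (x : ℝ) (n : ℕ) :
    scaledRem β x (n + 1) = greedyRem β x n / cprod β n :=
  rfl

lemma greedy_div_cprod (hβ : ∀ n, 0 < β n) (hx : 0 ≤ x) (n : ℕ) :
    (greedy β x n : ℝ) / cprod β n = scaledRem β x n - scaledRem β x (n + 1) := by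
  have hP := prod_range_pos hβ n
  have hβn := hβ n
  rw [scaledRem_succ, greedy_cast hβ hx, cprod_eq_prod_range_mul, scaledRem]
  field_simp

lemma sum_range_greedy_div_cprod (hβ : ∀ n, 0 < β n) (hx : 0 ≤ x) (N : ℕ) :
    ∑ n ∈ range N, (greedy β x n : ℝ) / cprod β n = x - scaledRem β x N := by
  simp_rw [greedy_div_cprod hβ hx, sum_range_sub', scaledRem_zero]

lemma tendsto_scaledRem (hβ : ∀ n, 0 < β n) (hprod : Tendsto (cprod β) atTop atTop) :
    Tendsto (scaledRem β x) atTop (𝓝 0) := by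
  refine (tendsto_add_atTop_iff_nat 1).mp ?_
  have hc := cprod_pos hβ
  refine squeeze_zero (fun n => div_nonneg (greedyRem_nonneg n) (hc n).le) (fun n => ?_)
    hprod.inv_tendsto_atTop
  rw [scaledRem_succ, Pi.inv_apply, inv_eq_one_div]
  exact div_le_div_of_nonneg_right (greedyRem_lt_one n).le (hc n).le

lemma hasSum_greedy_div_cprod (hβ : ∀ n, 0 < β n) (hprod : Tendsto (cprod β) atTop atTop)
    (hx : 0 ≤ x) : HasSum (fun n => (greedy β x n : ℝ) / cprod β n) x := by
  have hnonneg (n : ℕ) : 0 ≤ (greedy β x n : ℝ) / cprod β n :=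
    div_nonneg (Nat.cast_nonneg _) (cprod_pos hβ n).le
  rw [hasSum_iff_tendsto_nat_of_nonneg hnonneg]
  simp_rw [sum_range_greedy_div_cprod hβ hx]
  simpa using (tendsto_scaledRem hβ hprod).const_sub x

lemma tsum_greedy_div_cprod_nat_add (hβ : ∀ n, 0 < β n) (hprod : Tendsto (cprod β) atTop atTop)
    (hx : 0 ≤ x) (k : ℕ) :
    ∑' n, (greedy β x (k + n) : ℝ) / cprod β (k + n) = scaledRem β x k := by
  have h := (hasSum_nat_add_iff' k).mpr (hasSum_greedy_div_cprod hβ hprod hx)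
  rw [sum_range_greedy_div_cprod hβ hx, sub_sub_cancel] at h
  simpa only [add_comm k] using h.tsum_eq

lemma tsum_nat_add_eq_add_tsum {G : Type*} [AddCommGroup G] [TopologicalSpace G]
    [IsTopologicalAddGroup G] [T2Space G] {f : ℕ → G} (hf : Summable f) (k : ℕ) :
    ∑' n, f (k + n) = f k + ∑' n, f (k + 1 + n) := by
  have hk : Summable (fun n => f (k + n)) := by
    simpa only [add_comm k] using (summable_nat_add_iff k).mpr hf
  rw [hk.tsum_eq_zero_add, add_zero]
  simp only [← add_assoc, add_right_comm k _ 1]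

lemma eq_greedy_of_tsum_tail_lt (hβ : ∀ n, 0 < β n) {a : ℕ → ℕ}
    (hsum : Summable (fun n => (a n : ℝ) / cprod β n)) (hval : valN β a = x)
    (htail : ∀ ℓ, ∑' n, (a (ℓ + 1 + n) : ℝ) / cprod β (ℓ + 1 + n) < 1 / cprod β ℓ) :
    a = greedy β x := by
  set t : ℕ → ℝ := fun k => ∑' n, (a (k + n) : ℝ) / cprod β (k + n)
  have hc := cprod_pos hβ
  have step : ∀ k, prevRem β x k = (∏ i ∈ range k, β i) * t k →
      greedy β x k = a k ∧ prevRem β x (k + 1) = cprod β k * t (k + 1) := by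
    intro k hk
    have hscaled : cprod β k * t (k + 1) ∈ Set.Ico 0 1 :=
      ⟨mul_nonneg (hc k).le (tsum_nonneg fun n => div_nonneg (Nat.cast_nonneg _) (hc _).le),
        (lt_div_iff₀' (hc k)).mp (htail k)⟩
    have hsplit : β k * prevRem β x k = a k + cprod β k * t (k + 1) := by
      have hP := prod_range_pos hβ k
      have hβk := hβ k
      have hrec : t k = a k / cprod β k + t (k + 1) := tsum_nat_add_eq_add_tsum hsum k
      rw [hk, hrec, cprod_eq_prod_range_mul]
      field_simp
    exact greedy_step hsplit hscaled
  have hrem : ∀ k, prevRem β x k = (∏ i ∈ range k, β i) * t k := by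
    intro k
    induction k with
    | zero => simp [prevRem, t, ← hval, valN, valB]
    | succ k ih => exact (step k ih).2
  funext k
  exact (step k (hrem k)).1.symm

theorem stmt_5 (β : ℕ → ℝ) (hβ : IsCantorBase β) (x : ℝ)
    (hx : x ∈ Set.Icc (0:ℝ) 1) (a : ℕ → ℕ) :
    a = greedy β x ↔
      (Summable (fun n => (a n : ℝ) / cprod β n) ∧ valN β a = x ∧
        ∀ ℓ : ℕ, (∑' n : ℕ, (a (ℓ + 1 + n) : ℝ) / cprod β (ℓ + 1 + n)) < 1 / cprod β ℓ) := by
  obtain ⟨hβ1, hprod⟩ := hβ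
  have hpos (n : ℕ) : 0 < β n := one_pos.trans (hβ1 n)
  constructor
  · rintro rfl
    have hsum := hasSum_greedy_div_cprod hpos hprod hx.1
    refine ⟨hsum.summable, hsum.tsum_eq, fun ℓ => ?_⟩
    rw [tsum_greedy_div_cprod_nat_add hpos hprod hx.1, scaledRem_succ]
    exact div_lt_div_of_pos_right (greedyRem_lt_one ℓ) (cprod_pos hpos ℓ)
  · rintro ⟨hsum, hval, htail⟩
    exact eq_greedy_of_tsum_tail_lt hpos hsum hval htail
end

section
/- Let β = (β_n) be a Cantor real base and a a β-representation of some x ∈ [0,1]. Then a is the greedy β-expansion of x if and only if for all n ≥ 1, σ^n(a) <_lex d*_{β^{(n)}}(1). -/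
open Filter

/-!
Write `t n` for the value of the tail `σⁿ a` in the base `β⁽ⁿ⁾`, so that `t 0 = x` and
`β n * t n = a n + t (n + 1)`. The greedy algorithm is characterised by its remainders staying in
`[0, 1)`, so `a` is greedy iff `t n < 1` for all `n ≥ 1`.

Comparing a digit sequence `b` with the quasi-greedy expansion `q` of `1` at the first index `ℓ`
where they differ gives `valN γ b = 1 + (b ℓ - q ℓ - r ℓ + tail) / cprod γ ℓ`, where the
quasi-greedy remainder `r ℓ` lies in `(0, 1]`. Hence a tail that is not below `q` has value `≥ 1`.
Conversely, if every tail from position `1` on is below `q`, the rescaled excess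
`(t j - 1) / (β 0 ⋯ β (j - 1))` strictly increases from each `j ≥ 1` to some later index while
tending to `0`, which forces it to be negative.
-/

open Filter Topology Finset

lemma shiftBase_zero (β : ℕ → ℝ) : shiftBase β 0 = β :=
  funext fun k => congrArg β (zero_add k)

lemma shiftSeq_zero (a : ℕ → ℕ) : shiftSeq a 0 = a :=
  funext fun k => congrArg a (zero_add k)

lemma shiftBase_shiftBase (β : ℕ → ℝ) (m n : ℕ) :
    shiftBase (shiftBase β m) n = shiftBase β (m + n) :=
  funext fun k => congrArg β (add_assoc m n k).symm

lemma shiftSeq_shiftSeq (a : ℕ → ℕ) (m n : ℕ) :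
    shiftSeq (shiftSeq a m) n = shiftSeq a (m + n) :=
  funext fun k => congrArg a (add_assoc m n k).symm

lemma cprod_pos_s14 {γ : ℕ → ℝ} (hγ : ∀ i, 0 < γ i) (k : ℕ) : 0 < cprod γ k :=
  prod_pos fun i _ => hγ i

lemma cprod_succ (γ : ℕ → ℝ) (k : ℕ) : cprod γ (k + 1) = cprod γ k * γ (k + 1) :=
  prod_range_succ γ (k + 1)

lemma cprod_add (γ : ℕ → ℝ) (L k : ℕ) :
    cprod γ (L + k) = (∏ i ∈ range L, γ i) * cprod (shiftBase γ L) k :=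
  prod_range_add γ L (k + 1)

lemma IsCantorBase.pos {β : ℕ → ℝ} (hβ : IsCantorBase β) (i : ℕ) : 0 < β i :=
  one_pos.trans (hβ.1 i)

lemma IsCantorBase.tendsto_inv_prod {β : ℕ → ℝ} (hβ : IsCantorBase β) :
    Tendsto (fun j => (∏ i ∈ range j, β i)⁻¹) atTop (𝓝 0) :=
  (tendsto_add_atTop_iff_nat 1).1 hβ.2.inv_tendsto_atTop

lemma IsCantorBase.shift {β : ℕ → ℝ} (hβ : IsCantorBase β) (n : ℕ) :
    IsCantorBase (shiftBase β n) := by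
  refine ⟨fun k => hβ.1 (n + k), ?_⟩
  have hP : 0 < ∏ i ∈ range n, β i := prod_pos fun i _ => hβ.pos i
  refine ((hβ.2.comp (tendsto_add_atTop_nat n)).atTop_div_const hP).congr fun k => ?_
  rw [Function.comp_apply, add_comm, cprod_add, mul_div_cancel_left₀ _ hP.ne']

lemma valN_nonneg {γ : ℕ → ℝ} (hγ : ∀ i, 0 ≤ γ i) (b : ℕ → ℕ) : 0 ≤ valN γ b :=
  tsum_nonneg fun _ => div_nonneg (Nat.cast_nonneg _) (prod_nonneg fun i _ => hγ i)

lemma summable_shift {γ : ℕ → ℝ} {b : ℕ → ℕ} (hγ : ∀ i, γ i ≠ 0)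
    (hb : Summable fun k => (b k : ℝ) / cprod γ k) (L : ℕ) :
    Summable fun k => (shiftSeq b L k : ℝ) / cprod (shiftBase γ L) k := by
  have hP : ∏ i ∈ range L, γ i ≠ 0 := prod_ne_zero_iff.2 fun i _ => hγ i
  refine (((summable_nat_add_iff L).2 hb).mul_right (∏ i ∈ range L, γ i)).congr fun k => ?_
  rw [add_comm k L, cprod_add, div_mul_eq_mul_div, mul_comm, mul_div_mul_left _ _ hP]
  rfl

lemma valN_eq_sum_add {γ : ℕ → ℝ} {b : ℕ → ℕ} (hb : Summable fun k => (b k : ℝ) / cprod γ k)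
    (L : ℕ) :
    valN γ b = ∑ k ∈ range L, (b k : ℝ) / cprod γ k
      + valN (shiftBase γ L) (shiftSeq b L) / ∏ i ∈ range L, γ i := by
  rw [valN, valB, ← hb.sum_add_tsum_nat_add L, valN, valB, ← tsum_div_const]
  congr 1
  refine tsum_congr fun k => ?_
  rw [add_comm k L, cprod_add, mul_comm, ← div_div]
  rfl

lemma mul_valN_eq_add {γ : ℕ → ℝ} {b : ℕ → ℕ} (hγ : γ 0 ≠ 0)
    (hb : Summable fun k => (b k : ℝ) / cprod γ k) :
    γ 0 * valN γ b = b 0 + valN (shiftBase γ 1) (shiftSeq b 1) := by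
  rw [valN_eq_sum_add hb 1]
  simp only [cprod, zero_add, sum_range_one, prod_range_one]
  field_simp

lemma sub_ceil_sub_one_mem_Ioc (t : ℝ) : t - ((⌈t⌉ : ℝ) - 1) ∈ Set.Ioc 0 1 := by
  constructor <;> linarith [Int.ceil_lt_add_one t, Int.le_ceil t]

lemma toNat_ceil_sub_one_add {t : ℝ} (ht : 0 < t) :
    (((⌈t⌉ - 1).toNat : ℕ) : ℝ) + (t - ((⌈t⌉ : ℝ) - 1)) = t := by
  have h : ((⌈t⌉ - 1).toNat : ℤ) = ⌈t⌉ - 1 := Int.toNat_of_nonneg (by linarith [Int.ceil_pos.2 ht])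
  rw [← Int.cast_natCast, h]
  push_cast
  ring

lemma qRem_mem_Ioc (γ : ℕ → ℝ) (n : ℕ) : qRem γ n ∈ Set.Ioc 0 1 := by
  cases n with
  | zero => exact sub_ceil_sub_one_mem_Ioc _
  | succ n => exact sub_ceil_sub_one_mem_Ioc _

lemma quasiGreedy_zero_add_qRem {γ : ℕ → ℝ} (hγ : 0 < γ 0) :
    (quasiGreedy γ 0 : ℝ) + qRem γ 0 = γ 0 :=
  toNat_ceil_sub_one_add hγ

lemma quasiGreedy_succ_add_qRem {γ : ℕ → ℝ} {n : ℕ} (hγ : 0 < γ (n + 1)) :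
    (quasiGreedy γ (n + 1) : ℝ) + qRem γ (n + 1) = γ (n + 1) * qRem γ n :=
  toNat_ceil_sub_one_add (mul_pos hγ (qRem_mem_Ioc γ n).1)

lemma sum_quasiGreedy {γ : ℕ → ℝ} (hγ : ∀ i, 0 < γ i) (L : ℕ) :
    ∑ k ∈ range (L + 1), (quasiGreedy γ k : ℝ) / cprod γ k = 1 - qRem γ L / cprod γ L := by
  induction L with
  | zero =>
    have h := quasiGreedy_zero_add_qRem (hγ 0)
    have := (hγ 0).ne'
    simp only [cprod, zero_add, sum_range_one, prod_range_one]
    field_simp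
    linarith
  | succ L ih =>
    have h := quasiGreedy_succ_add_qRem (hγ (L + 1))
    have := (hγ (L + 1)).ne'
    have := (cprod_pos_s14 hγ L).ne'
    rw [sum_range_succ, ih, eq_sub_of_add_eq h, cprod_succ]
    field_simp
    ring

lemma hasSum_quasiGreedy {γ : ℕ → ℝ} (hγ : IsCantorBase γ) :
    HasSum (fun k => (quasiGreedy γ k : ℝ) / cprod γ k) 1 := by
  have hc := cprod_pos_s14 hγ.pos
  rw [hasSum_iff_tendsto_nat_of_nonneg fun k => div_nonneg (Nat.cast_nonneg _) (hc k).le]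
  refine (tendsto_add_atTop_iff_nat 1).1 ?_
  simp_rw [sum_quasiGreedy hγ.pos]
  have h0 : Tendsto (fun L => qRem γ L / cprod γ L) atTop (𝓝 0) :=
    squeeze_zero (fun L => (div_pos (qRem_mem_Ioc γ L).1 (hc L)).le)
      (fun L => (div_le_div_of_nonneg_right (qRem_mem_Ioc γ L).2 (hc L).le).trans_eq (one_div _))
      hγ.2.inv_tendsto_atTop
  simpa using tendsto_const_nhds.sub h0

lemma valN_eq_one_add_of_agree {γ : ℕ → ℝ} {b : ℕ → ℕ} (hγ : ∀ i, 0 < γ i)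
    (hb : Summable fun k => (b k : ℝ) / cprod γ k) {ℓ : ℕ}
    (h : ∀ k < ℓ, b k = quasiGreedy γ k) :
    valN γ b = 1 + ((b ℓ : ℝ) - quasiGreedy γ ℓ - qRem γ ℓ
      + valN (shiftBase γ (ℓ + 1)) (shiftSeq b (ℓ + 1))) / cprod γ ℓ := by
  have hprefix : ∑ k ∈ range ℓ, (b k : ℝ) / cprod γ k
      = ∑ k ∈ range ℓ, (quasiGreedy γ k : ℝ) / cprod γ k :=
    sum_congr rfl fun k hk => by rw [h k (mem_range.1 hk)]
  have hsum := sum_quasiGreedy hγ ℓ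
  rw [sum_range_succ] at hsum
  rw [valN_eq_sum_add hb (ℓ + 1), sum_range_succ, hprefix]
  change _ + _ / cprod γ ℓ = _
  linear_combination hsum

lemma one_le_valN_of_not_lexLt {γ : ℕ → ℝ} {b : ℕ → ℕ} (hγ : IsCantorBase γ)
    (hb : Summable fun k => (b k : ℝ) / cprod γ k) (h : ¬ LexLt b (quasiGreedy γ)) :
    1 ≤ valN γ b := by
  rcases (not_lt.1 h : toLex (quasiGreedy γ) ≤ toLex b).eq_or_lt with heq | ⟨ℓ, hagree, hgt⟩
  · rw [← toLex.injective heq]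
    exact (hasSum_quasiGreedy hγ).tsum_eq.ge
  · rw [valN_eq_one_add_of_agree hγ.pos hb fun k hk => (hagree k hk).symm]
    have hdigit : (quasiGreedy γ ℓ : ℝ) + 1 ≤ b ℓ := by exact_mod_cast hgt
    have htail := valN_nonneg (fun i => (hγ.shift (ℓ + 1)).pos i |>.le) (shiftSeq b (ℓ + 1))
    have hrem := (qRem_mem_Ioc γ ℓ).2
    exact le_add_of_nonneg_right (div_nonneg (by linarith) (cprod_pos_s14 hγ.pos ℓ).le)

lemma exists_valN_sub_one_lt_of_lexLt {γ : ℕ → ℝ} {b : ℕ → ℕ} (hγ : ∀ i, 0 < γ i)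
    (hb : Summable fun k => (b k : ℝ) / cprod γ k) (h : LexLt b (quasiGreedy γ)) :
    ∃ ℓ, valN γ b - 1
      < (valN (shiftBase γ (ℓ + 1)) (shiftSeq b (ℓ + 1)) - 1) / cprod γ ℓ := by
  obtain ⟨ℓ, hagree, hlt⟩ := h
  refine ⟨ℓ, ?_⟩
  rw [valN_eq_one_add_of_agree hγ hb hagree, add_sub_cancel_left]
  have hdigit : (b ℓ : ℝ) + 1 ≤ quasiGreedy γ ℓ := by exact_mod_cast hlt
  have hrem := (qRem_mem_Ioc γ ℓ).1
  exact div_lt_div_of_pos_right (by linarith) (cprod_pos_s14 hγ ℓ)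

lemma lt_zero_of_tendsto_zero_of_forall_exists_lt {ι : Type*} {f : ι → ℝ}
    (hf : Tendsto f cofinite (𝓝 0)) {S : Set ι} (hS : ∀ i ∈ S, ∃ j ∈ S, f i < f j) :
    ∀ i ∈ S, f i < 0 := by
  intro i hi
  by_contra! hfi
  obtain ⟨j, hj, hij⟩ := hS i hi
  have hfin : {k | f j ≤ f k}.Finite := by
    simpa only [not_lt] using eventually_cofinite.1 (hf.eventually (gt_mem_nhds (hfi.trans_lt hij)))
  obtain ⟨m, ⟨hmS, hjm⟩, hmax⟩ :=
    Set.exists_max_image (S ∩ {k | f j ≤ f k}) f (hfin.inter_of_right S) ⟨j, hj, le_refl (f j)⟩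
  obtain ⟨m', hm'S, hmm'⟩ := hS m hmS
  exact (hmax m' ⟨hm'S, hjm.trans hmm'.le⟩).not_gt hmm'

lemma valN_shift_lt_one_of_forall_lexLt {β : ℕ → ℝ} {a : ℕ → ℕ} (hβ : IsCantorBase β)
    (ha : Summable fun k => (a k : ℝ) / cprod β k)
    (H : ∀ n, 1 ≤ n → LexLt (shiftSeq a n) (quasiGreedy (shiftBase β n))) {n : ℕ} (hn : 1 ≤ n) :
    valN (shiftBase β n) (shiftSeq a n) < 1 := by
  have hP : ∀ j, 0 < ∏ i ∈ range j, β i := fun j => prod_pos fun i _ => hβ.pos i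
  set w : ℕ → ℝ := fun j => (valN (shiftBase β j) (shiftSeq a j) - 1) / ∏ i ∈ range j, β i
  have hw : Tendsto w cofinite (𝓝 0) := by
    rw [Nat.cofinite_eq_atTop]
    have hpartial : Tendsto (fun j => ∑ k ∈ range j, (a k : ℝ) / cprod β k) atTop
        (𝓝 (valN β a)) := ha.hasSum.tendsto_sum_nat
    have h := ((tendsto_const_nhds (x := valN β a)).sub hpartial).sub hβ.tendsto_inv_prod
    rw [sub_self, sub_zero] at h
    refine h.congr fun j => ?_
    simp only [w]
    rw [valN_eq_sum_add ha j, add_sub_cancel_left, sub_div, one_div]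
  have hstep : ∀ j ∈ {j | 1 ≤ j}, ∃ j' ∈ {j | 1 ≤ j}, w j < w j' := by
    intro j hj
    obtain ⟨ℓ, hℓ⟩ := exists_valN_sub_one_lt_of_lexLt (hβ.shift j).pos
      (summable_shift (fun i => (hβ.pos i).ne') ha j) (H j hj)
    rw [shiftBase_shiftBase, shiftSeq_shiftSeq] at hℓ
    refine ⟨j + (ℓ + 1), Nat.le_add_right_of_le hj, ?_⟩
    simp only [w]
    rw [prod_range_add, mul_comm, ← div_div]
    exact div_lt_div_of_pos_right hℓ (hP j)
  have hwn := lt_zero_of_tendsto_zero_of_forall_exists_lt hw hstep n hn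
  by_contra! h
  exact hwn.not_ge (div_nonneg (by linarith) (hP n).le)

noncomputable def greedyState (β : ℕ → ℝ) (x : ℝ) : ℕ → ℝ
  | 0 => x
  | n + 1 => greedyRem β x n

lemma greedy_eq_toNat_floor (β : ℕ → ℝ) (x : ℝ) (n : ℕ) :
    greedy β x n = ⌊β n * greedyState β x n⌋.toNat := by
  cases n <;> rfl

lemma greedyState_succ (β : ℕ → ℝ) (x : ℝ) (n : ℕ) :
    greedyState β x (n + 1) = Int.fract (β n * greedyState β x n) := by
  cases n <;> rfl

lemma eq_greedy_iff_forall_lt_one {β : ℕ → ℝ} {x : ℝ} {a : ℕ → ℕ} {t : ℕ → ℝ} (ht0 : t 0 = x)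
    (hrec : ∀ n, β n * t n = a n + t (n + 1)) (ht : ∀ n, 0 ≤ t n) :
    a = greedy β x ↔ ∀ n, t (n + 1) < 1 := by
  constructor
  · rintro rfl
    have hstate : ∀ n, t n = greedyState β x n := by
      intro n
      induction n with
      | zero => exact ht0
      | succ n ih =>
        have hfloor : ((greedy β x n : ℕ) : ℝ) = ⌊β n * t n⌋ := by
          have hnn : 0 ≤ β n * t n := by linarith [hrec n, ht (n + 1)]
          rw [greedy_eq_toNat_floor, ← ih]
          exact_mod_cast Int.toNat_of_nonneg (Int.floor_nonneg.2 hnn)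
        rw [greedyState_succ, ← ih, Int.fract, ← hfloor]
        linarith [hrec n]
    intro n
    rw [hstate, greedyState_succ]
    exact Int.fract_lt_one _
  · intro hlt
    have hfloor : ∀ n, ⌊β n * t n⌋ = a n := fun n =>
      Int.floor_eq_iff.2 ⟨by push_cast; linarith [hrec n, ht (n + 1)],
        by push_cast; linarith [hrec n, hlt n]⟩
    have hstate : ∀ n, t n = greedyState β x n := by
      intro n
      induction n with
      | zero => exact ht0
      | succ n ih =>
        rw [greedyState_succ, ← ih, Int.fract, hfloor, Int.cast_natCast]
        linarith [hrec n]
    funext n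
    rw [greedy_eq_toNat_floor, ← hstate, hfloor, Int.toNat_natCast]

theorem stmt_14_general (β : ℕ → ℝ) (hβ : IsCantorBase β) (x : ℝ)
    (a : ℕ → ℕ)
    (hsum : Summable (fun n => (a n : ℝ) / cprod β n)) (hval : valN β a = x) :
    a = greedy β x ↔
      ∀ n : ℕ, 1 ≤ n → LexLt (shiftSeq a n) (quasiGreedy (shiftBase β n)) := by
  have hsum_shift := summable_shift (fun i => (hβ.pos i).ne') hsum
  have ht0 : valN (shiftBase β 0) (shiftSeq a 0) = x := by
    rw [shiftBase_zero, shiftSeq_zero, hval]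
  have hrec : ∀ n, β n * valN (shiftBase β n) (shiftSeq a n)
      = a n + valN (shiftBase β (n + 1)) (shiftSeq a (n + 1)) := fun n => by
    have h := mul_valN_eq_add (hβ.pos n).ne' (hsum_shift n)
    rwa [shiftBase_shiftBase, shiftSeq_shiftSeq] at h
  rw [eq_greedy_iff_forall_lt_one ht0 hrec fun n => valN_nonneg (fun i => (hβ.pos _).le) _]
  constructor
  · intro hlt n hn
    by_contra hlex
    obtain ⟨m, rfl⟩ := Nat.exists_eq_add_of_le' hn
    exact (hlt m).not_ge (one_le_valN_of_not_lexLt (hβ.shift _) (hsum_shift _) hlex)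
  · exact fun H n => valN_shift_lt_one_of_forall_lexLt hβ hsum H n.succ_pos

theorem stmt_14 (β : ℕ → ℝ) (hβ : IsCantorBase β) (x : ℝ)
    (hx : x ∈ Set.Icc (0:ℝ) 1) (a : ℕ → ℕ)
    (hsum : Summable (fun n => (a n : ℝ) / cprod β n)) (hval : valN β a = x) :
    a = greedy β x ↔
      ∀ n : ℕ, 1 ≤ n → LexLt (shiftSeq a n) (quasiGreedy (shiftBase β n)) :=
  stmt_14_general β hβ x a hsum hval
end
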